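/- arXiv:2403.06499 — 3 statements merged into one kernel-verified Lean document; each statement's English description precedes it below -/
import Mathlib

section
/- The parametric complexity of the categorical model satisfies the recurrence C(K+2, n) = C(K+1, n) + (n/K) · C(K, n), where C(K, n) = Σ over compositions (h₁,...,h_K) of n into K nonnegative parts of [n!/(h₁!···h_K!)] · Π_{k=1}^{K} (h_k/n)^{h_k} (with convention 0^0 = 1). -/
/-- Parametric complexity of the `K`-category categorical model:
`C(K, n) = Σ_{h₁+...+h_K = n} (n! / (h₁! ⋯ h_K!)) · Π_k (h_k/n)^{h_k}`,
with the convention `0^0 = 1`. -/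
noncomputable def Ccat (K n : ℕ) : ℝ :=
  ∑ h ∈ Finset.Nat.antidiagonalTuple K n,
    ((Nat.factorial n : ℝ) / ∏ k, (Nat.factorial (h k) : ℝ)) *
      ∏ k, ((h k : ℝ) / (n : ℝ)) ^ (h k)

/-!
With `B(x) = Σ nⁿ xⁿ / n!` one has `C(K, n) = n! / nⁿ · [xⁿ] B^K`, so the recurrence is the
coefficient form of `x (B^K)' = K (B^{K+2} - B^{K+1})`, i.e. of `x B' = B³ - B²`. This differential
equation follows formally from two facts about the tree function `T(x) = Σ_{n ≥ 1} n^{n-1} xⁿ / n!`: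
`x T' = B - 1`, which is immediate, and `T B = B - 1`, which is Abel's identity.

We prove Abel's identity in the form `T · B_y = x · B_{y+1}` with `B_y(x) = Σ (y + n)ⁿ xⁿ / n!`,
by induction on the coefficient index: since `∂_y B_y = x B_{y+1}`, both sides have the same
derivative in `y`, and at `y = -(n+2)` the coefficient of `x^{n+2}` on the left is, up to a factor,
an `(n+2)`-nd finite difference of a polynomial of degree `n+1`, hence vanishes, like the right side.
-/

open Finset PowerSeries Nat

theorem sum_antidiagonal_neg_one_pow_mul_choose_mul_pow {R : Type*} [CommRing R] {m j : ℕ}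
    (h : j < m) : ∑ p ∈ antidiagonal m, (-1 : R) ^ p.2 * m.choose p.1 * (p.1 : R) ^ j = 0 := by
  have hΔ := congrFun (fwdDiff_iter_pow_eq_zero_of_lt (R := R) h) 0
  rw [fwdDiff_iter_eq_sum_shift] at hΔ
  rw [Nat.sum_antidiagonal_eq_sum_range_succ_mk]
  simpa [zsmul_eq_mul] using hΔ

noncomputable def abelCoeff (y : ℝ) (j : ℕ) : ℝ := (y + j) ^ j / j !

noncomputable def treeCoeff (i : ℕ) : ℝ := ((i : ℝ) + 1) ^ i / (i + 1)!

@[simp] theorem abelCoeff_zero (y : ℝ) : abelCoeff y 0 = 1 := by simp [abelCoeff]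

theorem abelCoeff_one (n : ℕ) : abelCoeff 1 n = abelCoeff 0 (n + 1) := by
  rw [abelCoeff, abelCoeff, factorial_succ]
  push_cast
  field_simp
  ring

theorem hasDerivAt_abelCoeff_succ (y : ℝ) (j : ℕ) :
    HasDerivAt (fun y => abelCoeff y (j + 1)) (abelCoeff (y + 1) j) y := by
  refine ((((hasDerivAt_id' y).add_const ((j + 1 : ℕ) : ℝ)).fun_pow (j + 1)).div_const
    ((j + 1)! : ℝ)).congr_deriv ?_
  rw [abelCoeff, factorial_succ, Nat.add_sub_cancel]
  push_cast
  field_simp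
  ring

theorem sum_antidiagonal_treeCoeff_mul_abelCoeff_neg (n : ℕ) :
    ∑ p ∈ antidiagonal (n + 1), treeCoeff p.1 * abelCoeff (-(n + 2 : ℕ)) p.2 = 0 := by
  have hterm : ∀ p ∈ antidiagonal (n + 1),
      ((n + 2)! : ℝ) * (treeCoeff p.1 * abelCoeff (-(n + 2 : ℕ)) p.2)
        = (-1 : ℝ) ^ p.2 * (n + 2).choose (p.1 + 1) * ((p.1 + 1 : ℕ) : ℝ) ^ (n + 1) := by
    rintro ⟨i, j⟩ hij
    rw [HasAntidiagonal.mem_antidiagonal] at hij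
    dsimp only at hij ⊢
    have hfac : ((n + 2)! : ℝ) = (n + 2).choose (i + 1) * (i + 1)! * j ! := by
      have := Nat.choose_mul_factorial_mul_factorial (show i + 1 ≤ n + 2 by omega)
      rw [show n + 2 - (i + 1) = j by omega] at this
      exact_mod_cast this.symm
    have hbase : (-(n + 2 : ℕ) : ℝ) + j = (-1) * ((i : ℝ) + 1) := by
      rw [show n + 2 = i + 1 + j by omega]
      push_cast
      ring
    have hpow : ((i : ℝ) + 1) ^ i * ((i : ℝ) + 1) ^ j = ((i : ℝ) + 1) ^ (n + 1) := by
      rw [← pow_add, hij]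
    rw [treeCoeff, abelCoeff, hbase, hfac, mul_pow]
    push_cast
    rw [← hpow]
    field_simp
  have hΔ := sum_antidiagonal_neg_one_pow_mul_choose_mul_pow (R := ℝ) (show n + 1 < n + 2 by omega)
  rw [Nat.sum_antidiagonal_succ] at hΔ
  rw [← mul_right_inj' (Nat.cast_ne_zero.mpr (n + 2).factorial_ne_zero), mul_sum,
    sum_congr rfl hterm, mul_zero]
  simpa using hΔ

theorem sum_antidiagonal_treeCoeff_mul_abelCoeff (n : ℕ) (y : ℝ) :
    ∑ p ∈ antidiagonal n, treeCoeff p.1 * abelCoeff y p.2 = abelCoeff (y + 1) n := by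
  induction n generalizing y with
  | zero => simp [treeCoeff]
  | succ n ih =>
    set F : ℝ → ℝ := fun y =>
      ∑ p ∈ antidiagonal (n + 1), treeCoeff p.1 * abelCoeff y p.2 - abelCoeff (y + 1) (n + 1)
    have hF : ∀ y, HasDerivAt F 0 y := by
      intro y
      have hlhs : HasDerivAt (fun y => ∑ p ∈ antidiagonal (n + 1), treeCoeff p.1 * abelCoeff y p.2)
          (abelCoeff (y + 1 + 1) n) y := by
        simp only [Nat.sum_antidiagonal_succ', abelCoeff_zero, mul_one]
        rw [← ih]
        exact (HasDerivAt.fun_sum fun p _ =>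
          (hasDerivAt_abelCoeff_succ y p.2).const_mul _).const_add _
      have hrhs : HasDerivAt (fun y => abelCoeff (y + 1) (n + 1)) (abelCoeff (y + 1 + 1) n) y :=
        (hasDerivAt_abelCoeff_succ (y + 1) n).comp_add_const y 1
      exact (hlhs.sub hrhs).congr_deriv (sub_self _)
    have hconst := is_const_of_deriv_eq_zero (fun y => (hF y).differentiableAt)
      (fun y => (hF y).deriv)
    have hrhs : abelCoeff (-(n + 2 : ℕ) + 1) (n + 1) = 0 := by
      rw [abelCoeff]
      push_cast
      ring_nf
    have hFy : F y = 0 := by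
      rw [hconst y (-(n + 2 : ℕ))]
      simp only [F, sum_antidiagonal_treeCoeff_mul_abelCoeff_neg, hrhs, sub_zero]
    exact sub_eq_zero.mp hFy

noncomputable def abelSeries (y : ℝ) : ℝ⟦X⟧ := PowerSeries.mk (abelCoeff y)

noncomputable def treeSeries : ℝ⟦X⟧ := X * PowerSeries.mk treeCoeff

theorem treeSeries_mul_abelSeries (y : ℝ) :
    treeSeries * abelSeries y = X * abelSeries (y + 1) := by
  ext (_ | n)
  · simp [treeSeries]
  · rw [treeSeries, mul_assoc, coeff_succ_X_mul, coeff_succ_X_mul, coeff_mul]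
    simp only [abelSeries, coeff_mk]
    exact sum_antidiagonal_treeCoeff_mul_abelCoeff n y

theorem derivative_treeSeries : d⁄dX ℝ treeSeries = abelSeries 1 := by
  ext n
  rw [coeff_derivative, treeSeries, coeff_succ_X_mul, abelSeries, coeff_mk, coeff_mk,
    abelCoeff_one, treeCoeff, abelCoeff, factorial_succ]
  push_cast
  field_simp
  ring

theorem X_mul_abelSeries_one : X * abelSeries 1 = abelSeries 0 - 1 := by
  ext (_ | n)
  · simp [abelSeries]
  · simp [abelSeries, coeff_succ_X_mul, abelCoeff_one, coeff_one]

theorem Derivation.mul_apply_eq_pow_three_sub_sq {R A : Type*} [CommRing R] [CommRing A]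
    [Algebra R A] (D : Derivation R A A) {x T B : A} (hTB : T * B = B - 1)
    (hT : x * D T = B - 1) : x * D B = B ^ 3 - B ^ 2 := by
  have hD : T * D B + B * D T = D B := by
    simpa [Derivation.leibniz, smul_eq_mul, add_comm] using congrArg D hTB
  linear_combination (x * D B) * hTB - (x * B) * hD + B ^ 2 * hT

theorem Derivation.mul_apply_pow_succ_eq {R A : Type*} [CommRing R] [CommRing A]
    [Algebra R A] (D : Derivation R A A) {x B : A} (hB : x * D B = B ^ 3 - B ^ 2) (K : ℕ) :
    x * D (B ^ (K + 1)) = (K + 1) • (B ^ (K + 3) - B ^ (K + 2)) := by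
  rw [Derivation.leibniz_pow, Nat.add_sub_cancel, smul_eq_mul, nsmul_eq_mul, nsmul_eq_mul]
  linear_combination ((K + 1 : ℕ) * B ^ K) * hB

theorem PowerSeries.coeff_X_mul_derivative {R : Type*} [CommSemiring R] (f : R⟦X⟧) (n : ℕ) :
    coeff n (X * d⁄dX R f) = n * coeff n f := by
  cases n with
  | zero => simp
  | succ n =>
    rw [coeff_succ_X_mul, coeff_derivative, mul_comm]
    push_cast
    rfl

theorem PowerSeries.coeff_pow_eq_sum_antidiagonalTuple {R : Type*} [CommSemiring R]
    (f : R⟦X⟧) (K n : ℕ) :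
    coeff n (f ^ K) = ∑ h ∈ Nat.antidiagonalTuple K n, ∏ i, coeff (h i) f := by
  rw [← Fin.prod_const, coeff_prod, finsuppAntidiag, sum_map,
    ← piAntidiag_univ_fin_eq_antidiagonalTuple, ← sum_attach (piAntidiag univ n)]
  rfl

theorem Ccat_eq_mul_coeff_pow (K n : ℕ) :
    Ccat K n = (n ! / (n : ℝ) ^ n) * coeff n (abelSeries 0 ^ K) := by
  rw [Ccat, coeff_pow_eq_sum_antidiagonalTuple, mul_sum]
  refine sum_congr rfl fun h hh => ?_
  have hsum : ∑ i, h i = n := Nat.mem_antidiagonalTuple.mp hh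
  simp only [abelSeries, coeff_mk, abelCoeff, zero_add, div_pow, prod_div_distrib,
    prod_pow_eq_pow_sum, hsum]
  ring

theorem stmt2_general (K n : ℕ) (hK : 0 < K) :
    Ccat (K + 2) n = Ccat (K + 1) n + ((n : ℝ) / (K : ℝ)) * Ccat K n := by
  obtain ⟨K, rfl⟩ : ∃ m, K = m + 1 := ⟨K - 1, by omega⟩
  have hB : X * d⁄dX ℝ (abelSeries 0) = abelSeries 0 ^ 3 - abelSeries 0 ^ 2 :=
    (d⁄dX ℝ).mul_apply_eq_pow_three_sub_sq
      (by rw [treeSeries_mul_abelSeries, zero_add, X_mul_abelSeries_one])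
      (by rw [derivative_treeSeries, X_mul_abelSeries_one])
  have hcoeff := congrArg (coeff n) ((d⁄dX ℝ).mul_apply_pow_succ_eq hB K)
  rw [coeff_X_mul_derivative, map_nsmul, map_sub, nsmul_eq_mul] at hcoeff
  rw [Ccat_eq_mul_coeff_pow, Ccat_eq_mul_coeff_pow, Ccat_eq_mul_coeff_pow,
    show K + 1 + 2 = K + 3 from rfl, show K + 1 + 1 = K + 2 from rfl]
  push_cast at hcoeff ⊢
  field_simp
  linear_combination -hcoeff

/-- The Kontkanen–Myllymäki recurrence:
`C(K+2, n) = C(K+1, n) + (n/K) · C(K, n)`. -/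
theorem stmt2 (K n : ℕ) (hK : 0 < K) (hn : 0 < n) :
    Ccat (K + 2) n = Ccat (K + 1) n + ((n : ℝ) / (K : ℝ)) * Ccat K n :=
  stmt2_general K n hK
end

section
/- The parametric complexity of the independence model on a product of finite sets factorizes: Σ over all z^n ∈ (𝒳×𝒴)^n of max over product distributions P_X⊗P_Y of the likelihood equals C_CAT(|𝒳|, n)·C_CAT(|𝒴|, n). -/
/-- Number of occurrences of the value `a` in the sequence `x`. -/
def seqCount {n : ℕ} {α : Type*} [DecidableEq α] (x : Fin n → α) (a : α) : ℕ :=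
  (Finset.univ.filter fun i => x i = a).card

/-- Parametric complexity of the `K`-category categorical model
(sequence form): `C_CAT(K,n) = Σ_{x^n} Π_k (n(X=k)/n)^{n(X=k)}`. -/
noncomputable def CcatSeq (K n : ℕ) : ℝ :=
  ∑ x : Fin n → Fin K,
    ∏ k : Fin K, ((seqCount x k : ℝ) / (n : ℝ)) ^ (seqCount x k)

theorem Fintype.sum_arrow_prod_mul {ι α β R : Type*} [Fintype ι] [DecidableEq ι]
    [Fintype α] [Fintype β] [CommSemiring R] (f : (ι → α) → R) (g : (ι → β) → R) :
    ∑ z : ι → α × β, f (fun i => (z i).1) * g (fun i => (z i).2) =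
      (∑ x, f x) * ∑ y, g y := by
  rw [Finset.sum_mul_sum, ← Fintype.sum_prod_type']
  exact Fintype.sum_equiv (Equiv.arrowProdEquivProdArrow ι (fun _ => α) (fun _ => β)) _ _
    fun _ => rfl

theorem stmt11_general (mX mY n : ℕ) :
    (∑ z : Fin n → Fin mX × Fin mY,
      (∏ k : Fin mX,
        ((seqCount (fun i => (z i).1) k : ℝ) / (n : ℝ))
          ^ (seqCount (fun i => (z i).1) k)) *
      (∏ k' : Fin mY,
        ((seqCount (fun i => (z i).2) k' : ℝ) / (n : ℝ))
          ^ (seqCount (fun i => (z i).2) k'))) =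
    CcatSeq mX n * CcatSeq mY n :=
  Fintype.sum_arrow_prod_mul
    (fun x => ∏ k, ((seqCount x k : ℝ) / n) ^ seqCount x k)
    (fun y => ∏ k', ((seqCount y k' : ℝ) / n) ^ seqCount y k')

/-- The parametric complexity of the independence model on a product of
finite alphabets factorizes:
`Σ_{z^n} (max likelihood under independence) = C_CAT(mX,n) · C_CAT(mY,n)`. -/
theorem stmt11 (mX mY n : ℕ) (hn : 0 < n) :
    (∑ z : Fin n → Fin mX × Fin mY,
      (∏ k : Fin mX,
        ((seqCount (fun i => (z i).1) k : ℝ) / (n : ℝ))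
          ^ (seqCount (fun i => (z i).1) k)) *
      (∏ k' : Fin mY,
        ((seqCount (fun i => (z i).2) k' : ℝ) / (n : ℝ))
          ^ (seqCount (fun i => (z i).2) k'))) =
    CcatSeq mX n * CcatSeq mY n :=
  stmt11_general mX mY n
end

section
/- Strict inequality of parametric complexities for n ≥ 2, m_X, m_Y ≥ 2: C_CAT(m_X, n)·C_CAT(m_Y, n) < C_CAT(m_X·m_Y, n). -/
/-!
Summing over pairs of sequences, `C(mX, n) · C(mY, n)` becomes a sum over
`z : Fin n → Fin mX × Fin mY` of the product of the maximised likelihoods of the two coordinate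
sequences of `z`. That product is the likelihood of `z` under the product of its marginal
empirical distributions, so by Gibbs' inequality it is at most the maximised likelihood of `z`
itself, the summand of `C(mX · mY, n)`. The inequality is strict for
`z = (a₀, b₀), (a₁, b₁), …, (a₁, b₁)`: its three maximised likelihoods share one value
`t ∈ (0, 1)`, and `t² < t`.
-/

open Finset Real

section Counts

variable {n : ℕ} {α β : Type*} [DecidableEq α] [DecidableEq β]

lemma seqCount_comp_of_injective {f : α → β} (hf : Function.Injective f) (x : Fin n → α)
    (a : α) : seqCount (f ∘ x) (f a) = seqCount x a := by
  simp only [seqCount, Function.comp_apply, hf.eq_iff]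

lemma seqCount_apply_pos (x : Fin n → α) (i : Fin n) : 0 < seqCount x (x i) :=
  card_pos.2 ⟨i, by simp⟩

variable [Fintype α]

lemma sum_seqCount (x : Fin n → α) : ∑ a, seqCount x a = n := by
  simpa [seqCount] using (card_eq_sum_card_fiberwise (f := x) (s := univ) (t := univ)
    fun i _ => mem_univ (x i)).symm

lemma prod_pow_seqCount {M : Type*} [CommMonoid M] (x : Fin n → α) (g : α → M) :
    ∏ a, g a ^ seqCount x a = ∏ i, g (x i) := by
  simp only [seqCount, ← prod_const]
  exact prod_fiberwise' univ x g

end Counts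

lemma pow_le_pow_mul_exp {p q : ℝ} (hp : 0 ≤ p) (hq : 0 < q) (c : ℕ) :
    p ^ c ≤ q ^ c * exp (c * (p / q - 1)) := by
  have hpq : p / q ≤ exp (p / q - 1) := by linarith [add_one_le_exp (p / q - 1)]
  calc p ^ c = q ^ c * (p / q) ^ c := by rw [← mul_pow, mul_div_cancel₀ p hq.ne']
    _ ≤ q ^ c * exp (p / q - 1) ^ c := by gcongr
    _ = q ^ c * exp (c * (p / q - 1)) := by rw [exp_nat_mul]

/-- Gibbs' inequality, multiplicative form. -/
lemma prod_pow_le_prod_div_sum_pow {α : Type*} [Fintype α] (c : α → ℕ) {p : α → ℝ}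
    (hp : ∀ a, 0 ≤ p a) (hp_sum : ∑ a, p a ≤ 1) :
    ∏ a, p a ^ c a ≤ ∏ a, ((c a : ℝ) / ∑ b, c b) ^ c a := by
  set N : ℝ := ∑ b, (c b : ℝ)
  -- `t ≤ exp (t - 1)` at `t = p a / (c a / N)`; the exponential factors then multiply to
  -- `exp (N * (∑ a, p a - 1)) ≤ 1`.
  have hterm : ∀ a, p a ^ c a ≤ ((c a : ℝ) / N) ^ c a * exp (N * p a - c a) := by
    intro a
    rcases Nat.eq_zero_or_pos (c a) with hca | hca
    · simp only [hca, pow_zero, Nat.cast_zero, sub_zero, one_mul]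
      exact one_le_exp (mul_nonneg (sum_nonneg fun b _ => Nat.cast_nonneg _) (hp a))
    have hN : (c a : ℝ) ≤ N := single_le_sum (fun b _ => Nat.cast_nonneg (c b)) (mem_univ a)
    have hca' : (0 : ℝ) < c a := Nat.cast_pos.2 hca
    convert pow_le_pow_mul_exp (hp a) (div_pos hca' (hca'.trans_le hN)) (c a) using 3
    field_simp
  calc ∏ a, p a ^ c a
      ≤ ∏ a, ((c a : ℝ) / N) ^ c a * exp (N * p a - c a) :=
        prod_le_prod (fun a _ => pow_nonneg (hp a) _) fun a _ => hterm a
    _ = (∏ a, ((c a : ℝ) / N) ^ c a) * exp (N * (∑ a, p a - 1)) := by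
        rw [prod_mul_distrib, ← exp_sum, sum_sub_distrib, ← mul_sum, mul_sub, mul_one]
    _ ≤ ∏ a, ((c a : ℝ) / N) ^ c a := by
        refine mul_le_of_le_one_right (prod_nonneg fun a _ => by positivity) ?_
        exact exp_le_one_iff.2 (mul_nonpos_of_nonneg_of_nonpos (by positivity) (by linarith))
    _ = ∏ a, ((c a : ℝ) / ∑ b, c b) ^ c a := by push_cast; rfl

section Likelihood

variable {n : ℕ} {α β : Type*} [Fintype α] [DecidableEq α] [Fintype β] [DecidableEq β]

/-- The maximised likelihood of the categorical model at `x`: the likelihood of `x` under its own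
empirical distribution. -/
noncomputable def empiricalLikelihood (x : Fin n → α) : ℝ :=
  ∏ a, ((seqCount x a : ℝ) / n) ^ seqCount x a

lemma CcatSeq_eq_sum (K n : ℕ) :
    CcatSeq K n = ∑ x : Fin n → Fin K, empiricalLikelihood x := rfl

lemma empiricalLikelihood_eq_prod (x : Fin n → α) :
    empiricalLikelihood x = ∏ i, (seqCount x (x i) : ℝ) / n :=
  prod_pow_seqCount x _

lemma empiricalLikelihood_comp_of_injective {f : α → β} (hf : Function.Injective f)
    (x : Fin n → α) : empiricalLikelihood (f ∘ x) = empiricalLikelihood x := by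
  simp only [empiricalLikelihood_eq_prod, Function.comp_apply,
    ← seqCount_comp_of_injective hf x]

lemma sum_empiricalLikelihood_congr (e : α ≃ β) :
    ∑ x : Fin n → α, empiricalLikelihood x = ∑ y : Fin n → β, empiricalLikelihood y :=
  Fintype.sum_equiv (Equiv.arrowCongr (Equiv.refl _) e) _ _ fun x =>
    (empiricalLikelihood_comp_of_injective e.injective x).symm

lemma sum_empiricalLikelihood_mul_sum :
    (∑ x : Fin n → α, empiricalLikelihood x) * ∑ y : Fin n → β, empiricalLikelihood y =
      ∑ z : Fin n → α × β, empiricalLikelihood (Prod.fst ∘ z) *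
        empiricalLikelihood (Prod.snd ∘ z) := by
  rw [Fintype.sum_mul_sum, ← Fintype.sum_prod_type']
  exact Fintype.sum_equiv (Equiv.arrowProdEquivProdArrow _ _ _).symm _ _ fun _ => rfl

lemma empiricalLikelihood_pos (x : Fin n → α) : 0 < empiricalLikelihood x := by
  rw [empiricalLikelihood_eq_prod]
  refine prod_pos fun i _ => div_pos ?_ ?_
  · exact_mod_cast seqCount_apply_pos x i
  · exact_mod_cast i.pos

lemma empiricalLikelihood_lt_one {x : Fin n → α} {i j : Fin n} (hij : x i ≠ x j) :
    empiricalLikelihood x < 1 := by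
  have hn : (0 : ℝ) < n := by exact_mod_cast i.pos
  have hle (k : Fin n) : (seqCount x (x k) : ℝ) / n ≤ 1 := by
    rw [div_le_one hn]
    exact_mod_cast (card_le_univ _).trans (Fintype.card_fin n).le
  have hlt : (seqCount x (x i) : ℝ) / n < 1 := by
    rw [div_lt_one hn]
    have : seqCount x (x i) < Fintype.card (Fin n) :=
      card_lt_univ_of_notMem (x := j) (by simpa using hij.symm)
    exact_mod_cast this.trans_eq (Fintype.card_fin n)
  rw [empiricalLikelihood_eq_prod, ← mul_prod_erase _ _ (mem_univ i)]
  calc _ ≤ (seqCount x (x i) : ℝ) / n * 1 := by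
        gcongr
        exact prod_le_one (fun k _ => by positivity) fun k _ => hle k
    _ < 1 := by rwa [mul_one]

lemma prod_le_empiricalLikelihood (x : Fin n → α) {p : α → ℝ} (hp : ∀ a, 0 ≤ p a)
    (hp_sum : ∑ a, p a ≤ 1) : ∏ i, p (x i) ≤ empiricalLikelihood x := by
  rw [← prod_pow_seqCount, empiricalLikelihood]
  convert prod_pow_le_prod_div_sum_pow (seqCount x) hp hp_sum using 5
  exact_mod_cast (sum_seqCount x).symm

lemma empiricalLikelihood_fst_mul_snd_le (z : Fin n → α × β) :
    empiricalLikelihood (Prod.fst ∘ z) * empiricalLikelihood (Prod.snd ∘ z) ≤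
      empiricalLikelihood z := by
  set c₁ := seqCount (Prod.fst ∘ z)
  set c₂ := seqCount (Prod.snd ∘ z)
  rw [empiricalLikelihood_eq_prod, empiricalLikelihood_eq_prod, ← prod_mul_distrib]
  refine prod_le_empiricalLikelihood z (p := fun q => (c₁ q.1 : ℝ) / n * ((c₂ q.2 : ℝ) / n))
    (fun q => by positivity) ?_
  simp only [Fintype.sum_prod_type, ← Fintype.sum_mul_sum, ← sum_div]
  push_cast [← Nat.cast_sum, c₁, c₂, sum_seqCount]
  exact mul_le_one₀ (div_self_le_one _) (by positivity) (div_self_le_one _)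

lemma exists_empiricalLikelihood_fst_mul_snd_lt [Nontrivial α] [Nontrivial β] (hn : 2 ≤ n) :
    ∃ z : Fin n → α × β,
      empiricalLikelihood (Prod.fst ∘ z) * empiricalLikelihood (Prod.snd ∘ z) <
        empiricalLikelihood z := by
  obtain ⟨a₀, a₁, ha⟩ := exists_pair_ne α
  obtain ⟨b₀, b₁, hb⟩ := exists_pair_ne β
  let x : Fin n → Bool := fun i => i.val = 0
  let f : Bool → α × β := fun t => bif t then (a₀, b₀) else (a₁, b₁)
  have hx : x ⟨0, by omega⟩ ≠ x ⟨1, by omega⟩ := by simp [x]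
  have hf₁ : Function.Injective (Prod.fst ∘ f) := Bool.injective_iff.2 ha.symm
  have hf₂ : Function.Injective (Prod.snd ∘ f) := Bool.injective_iff.2 hb.symm
  have hf : Function.Injective f := hf₁.of_comp
  refine ⟨f ∘ x, ?_⟩
  rw [← Function.comp_assoc, ← Function.comp_assoc, empiricalLikelihood_comp_of_injective hf₁,
    empiricalLikelihood_comp_of_injective hf₂, empiricalLikelihood_comp_of_injective hf]
  exact mul_lt_of_lt_one_left (empiricalLikelihood_pos x) (empiricalLikelihood_lt_one hx)

end Likelihood

/-- Strict inequality of parametric complexities for `n ≥ 2`,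
`mX, mY ≥ 2`: `C_CAT(mX, n) · C_CAT(mY, n) < C_CAT(mX·mY, n)`. -/
theorem stmt14 (mX mY n : ℕ) (hn : 2 ≤ n) (hX : 2 ≤ mX) (hY : 2 ≤ mY) :
    CcatSeq mX n * CcatSeq mY n < CcatSeq (mX * mY) n := by
  have := Fin.nontrivial_iff_two_le.2 hX
  have := Fin.nontrivial_iff_two_le.2 hY
  obtain ⟨z₀, hz₀⟩ := exists_empiricalLikelihood_fst_mul_snd_lt (α := Fin mX) (β := Fin mY) hn
  rw [CcatSeq_eq_sum, CcatSeq_eq_sum, CcatSeq_eq_sum, sum_empiricalLikelihood_mul_sum,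
    sum_empiricalLikelihood_congr finProdFinEquiv.symm]
  exact sum_lt_sum (fun z _ => empiricalLikelihood_fst_mul_snd_le z) ⟨z₀, mem_univ _, hz₀⟩
end
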